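/- arXiv:1503.04916 — 4 statements merged into one kernel-verified Lean document; each statement's English description precedes it below -/
import Mathlib

section
/- For a layered architecture configuration c and a layer l ∈ L, every port p in the attachment-closure out(l)* belongs to a layer on which l reflexively-transitively syntactically depends; that is, for all p ∈ out(l)*, (layer(p), l) is in the reflexive-transitive closure of the syntactic dependency relation. -/
/-!  A formalization of the layered architecture model:
ports, services, valuations, layers, configurations, attachment closure,
configuration semantics, semantic update, syntactic and semantic dependency. -/

open Set

universe u v

/-- A valuation of a set of ports `P` assigns to each port `p ∈ P` a service in `ty p`. -/
def Val {Port : Type u} {Service : Type v} (ty : Port → Set Service) (P : Set Port) :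
    Type (max u v) :=
  ∀ p, p ∈ P → ty p

/-- Restriction of a valuation to a smaller port set. -/
def Val.restrict {Port : Type u} {Service : Type v} {ty : Port → Set Service}
    {P Q : Set Port} (h : Q ⊆ P) (ν : Val ty P) : Val ty Q :=
  fun p hp => ν p (h hp)

/-- Pointwise agreement of valuations of (possibly different) port sets. -/
def ValEq {Port : Type u} {Service : Type v} {ty : Port → Set Service}
    {P Q : Set Port} (μ : Val ty P) (μ' : Val ty Q) : Prop :=
  ∀ p (h : p ∈ P) (h' : p ∈ Q), (μ p h : Service) = (μ' p h' : Service)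

/-- A layer: input ports, output ports and a (nondeterministic) behavior function. -/
structure Layer (Port : Type u) (Service : Type v) (ty : Port → Set Service) where
  I : Set Port
  O : Set Port
  f : Val ty I → Set (Val ty O)

variable {Port : Type u} {Service : Type v} {ty : Port → Set Service}

/-- All ports of a layer. -/
def Layer.ports (l : Layer Port Service ty) : Set Port := l.I ∪ l.O

/-- Semantic update of a layer: replace its behavior function. -/
def Layer.update (l : Layer Port Service ty) (f : Val ty l.I → Set (Val ty l.O)) :
    Layer Port Service ty := ⟨l.I, l.O, f⟩

/-- The raw data of a layered architecture configuration: a set of layers and an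
attachment (a partial map from ports to ports, `A i = some o` meaning input port `i`
is attached to output port `o`). -/
structure Config (Port : Type u) (Service : Type v) (ty : Port → Set Service) where
  L : Set (Layer Port Service ty)
  A : Port → Option Port

/-- All input ports occurring in the configuration. -/
def Config.inPorts (c : Config Port Service ty) : Set Port := ⋃ l ∈ c.L, l.I

/-- All output ports occurring in the configuration. -/
def Config.outPorts (c : Config Port Service ty) : Set Port := ⋃ l ∈ c.L, l.O

/-- All ports occurring in the configuration. -/
def Config.ports (c : Config Port Service ty) : Set Port := ⋃ l ∈ c.L, l.ports

/-- The open input ports: input ports not attached. -/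
def Config.openIn (c : Config Port Service ty) : Set Port :=
  c.inPorts \ {p | (c.A p).isSome}

/-- The axioms of a layered architecture configuration, relative to a global
partition of the ports into input ports `Inp` and output ports `Outp`. -/
structure IsLAC (Inp Outp : Set Port) (c : Config Port Service ty) : Prop where
  io_disj : Disjoint Inp Outp
  inputs : ∀ l ∈ c.L, l.I ⊆ Inp
  outputs : ∀ l ∈ c.L, l.O ⊆ Outp
  ports_disj : ∀ k ∈ c.L, ∀ l ∈ c.L, k = l ∨ Disjoint k.ports l.ports
  domA : ∀ i o, c.A i = some o → i ∈ c.inPorts ∧ o ∈ c.outPorts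
  compat : ∀ i o, c.A i = some o → ty o ⊆ ty i

instance : Nonempty (Layer Port Service ty) := ⟨⟨∅, ∅, fun _ => ∅⟩⟩

/-- The layer owning a port (unique in a configuration by port-disjointness). -/
noncomputable def Config.proj (c : Config Port Service ty) (p : Port) :
    Layer Port Service ty :=
  Classical.epsilon fun l => l ∈ c.L ∧ p ∈ l.ports

/-- The attachment closure `out(l)*`: the least set of ports of `c` containing `out(l)`,
closed under the attachment and under adding all input ports of any layer owning an
output port in the set. -/
def Config.star (c : Config Port Service ty) (l : Layer Port Service ty) : Set Port :=
  ⋂₀ {P | P ⊆ c.ports ∧ l.O ⊆ P ∧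
      (∀ i o, c.A i = some o → i ∈ P → o ∈ P) ∧
      (∀ o, o ∈ c.outPorts → o ∈ P → (c.proj o).I ⊆ P)}

/-- `ν` is a consistent valuation of the attachment closure `out(l)*` for the
open-input valuation `μ`. -/
def Config.witness (c : Config Port Service ty) (l : Layer Port Service ty)
    (μ : Val ty c.openIn) (ν : Val ty (c.star l)) : Prop :=
  (∀ p (h1 : p ∈ c.openIn) (h2 : p ∈ c.star l),
      (μ p h1 : Service) = (ν p h2 : Service)) ∧
  (∀ i o, c.A i = some o → ∀ (hi : i ∈ c.star l) (ho : o ∈ c.star l),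
      (ν i hi : Service) = (ν o ho : Service)) ∧
  (∀ o, o ∈ c.star l → o ∈ c.outPorts →
      ∃ (hI : (c.proj o).I ⊆ c.star l) (ξ : Val ty (c.proj o).O),
        ξ ∈ (c.proj o).f (Val.restrict hI ν) ∧
        ∀ p (h1 : p ∈ (c.proj o).O) (h2 : p ∈ c.star l),
          (ξ p h1 : Service) = (ν p h2 : Service))

/-- Configuration semantics of layer `l` in configuration `c`. -/
noncomputable def Config.sem (c : Config Port Service ty) (l : Layer Port Service ty)
    (μ : Val ty c.openIn) : Set (Val ty l.O) :=
  {κ | ∃ (ν : Val ty (c.star l)) (hO : l.O ⊆ c.star l),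
      κ = Val.restrict hO ν ∧ c.witness l μ ν}

/-- Semantic update of a configuration: replace the behavior function of layer `l`. -/
def Config.update (c : Config Port Service ty) (l : Layer Port Service ty)
    (f : Val ty l.I → Set (Val ty l.O)) : Config Port Service ty :=
  ⟨(c.L \ {l}) ∪ {l.update f}, c.A⟩

/-- Syntactic dependency: `l'` syntactically depends on `l`. -/
def Config.syndep (c : Config Port Service ty) (l l' : Layer Port Service ty) : Prop :=
  ∃ o ∈ l.O, ∃ i ∈ l'.I, c.A i = some o

open scoped Classical in
/-- Semantic dependency: `l'` semantically depends on `l`, i.e. some behavior update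
of `l` changes the configuration semantics of `l'` (of the updated layer if `l = l'`). -/
noncomputable def Config.semdep (c : Config Port Service ty)
    (l l' : Layer Port Service ty) : Prop :=
  if l = l' then
    ∃ (f : Val ty l.I → Set (Val ty l.O)) (μ : Val ty c.openIn)
      (μ' : Val ty (c.update l f).openIn),
      ValEq μ μ' ∧ c.sem l μ ≠ (c.update l f).sem (l.update f) μ'
  else
    ∃ (f : Val ty l.I → Set (Val ty l.O)) (μ : Val ty c.openIn)
      (μ' : Val ty (c.update l f).openIn),
      ValEq μ μ' ∧ c.sem l' μ ≠ (c.update l f).sem l' μ'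

/-- A configuration is usable iff some valuation of the open input ports makes the
configuration semantics of every layer nonempty. -/
def Config.usable (c : Config Port Service ty) : Prop :=
  ∃ μ : Val ty c.openIn, ∀ l ∈ c.L, c.sem l μ ≠ ∅

variable {Inp Outp : Set Port}

lemma Config.proj_spec (c : Config Port Service ty) {p : Port}
    (hp : ∃ k, k ∈ c.L ∧ p ∈ k.ports) : c.proj p ∈ c.L ∧ p ∈ (c.proj p).ports :=
  Classical.epsilon_spec hp

lemma Config.proj_eq (c : Config Port Service ty) (hc : IsLAC Inp Outp c)
    {k : Layer Port Service ty} {p : Port} (hk : k ∈ c.L) (hp : p ∈ k.ports) :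
    c.proj p = k := by
  obtain ⟨hL, hpm⟩ := c.proj_spec ⟨k, hk, hp⟩
  rcases hc.ports_disj _ hL _ hk with h | h
  · exact h
  · exact absurd (h.ne_of_mem hpm hp) (fun h2 => h2 rfl)

lemma mem_ports_of_mem (c : Config Port Service ty) {k : Layer Port Service ty}
    {p : Port} (hk : k ∈ c.L) (hp : p ∈ k.ports) : p ∈ c.ports :=
  Set.mem_biUnion hk hp

/-- every port in the attachment closure `out(l)*` belongs to a layer on
which `l` reflexively-transitively syntactically depends. -/
theorem star_ports_syndep (c : Config Port Service ty) (hc : IsLAC Inp Outp c)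
    (l : Layer Port Service ty) (hl : l ∈ c.L) :
    ∀ p ∈ c.star l, Relation.ReflTransGen c.syndep (c.proj p) l := by
  intro p hp
  set S : Set Port := {q | q ∈ c.ports ∧ Relation.ReflTransGen c.syndep (c.proj q) l}
    with hS
  have key : S ∈ {P | P ⊆ c.ports ∧ l.O ⊆ P ∧
      (∀ i o, c.A i = some o → i ∈ P → o ∈ P) ∧
      (∀ o, o ∈ c.outPorts → o ∈ P → (c.proj o).I ⊆ P)} := by
    refine ⟨fun q hq => hq.1, ?_, ?_, ?_⟩
    · intro o ho
      have hop : o ∈ l.ports := Or.inr ho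
      refine ⟨mem_ports_of_mem c hl hop, ?_⟩
      rw [c.proj_eq hc hl hop]
    · intro i o hio hiS
      obtain ⟨hiIn, hoOut⟩ := hc.domA i o hio
      obtain ⟨ki, hki, hiI⟩ := Set.mem_iUnion₂.mp hiIn
      obtain ⟨ko, hko, hoO⟩ := Set.mem_iUnion₂.mp hoOut
      have hpi : c.proj i = ki := c.proj_eq hc hki (Or.inl hiI)
      have hpo : c.proj o = ko := c.proj_eq hc hko (Or.inr hoO)
      refine ⟨mem_ports_of_mem c hko (Or.inr hoO), ?_⟩
      have step : c.syndep (c.proj o) (c.proj i) := by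
        rw [hpi, hpo]
        exact ⟨o, hoO, i, hiI, hio⟩
      exact Relation.ReflTransGen.head step hiS.2
    · intro o hoOut hoS i hiI
      obtain ⟨ko, hko, hoO⟩ := Set.mem_iUnion₂.mp hoOut
      have hpo : c.proj o = ko := c.proj_eq hc hko (Or.inr hoO)
      have hiports : i ∈ ko.ports := Or.inl (hpo ▸ hiI)
      refine ⟨mem_ports_of_mem c hko hiports, ?_⟩
      rw [c.proj_eq hc hko hiports, ← hpo]
      exact hoS.2
  have : p ∈ S := hp S key
  exact this.2
end

section
/- Syntactic dependency does not imply semantic dependency in general: there exists a layered architecture configuration c and a layer l such that l →syn l (l syntactically depends on itself) but l does not semantically depend on itself. In particular, this holds for a single layer with one input port i and one output port o, where type(i) = type(o) = ∅ and A = {(i, o)}. -/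
/-!  A formalization of the layered architecture model:
ports, services, valuations, layers, configurations, attachment closure,
configuration semantics, semantic update, syntactic and semantic dependency. -/

open Set

universe u v

variable {Port : Type u} {Service : Type v} {ty : Port → Set Service}

/-! A port of empty type admits no valuation, so a layer with such an input port has exactly
one behavior function (the empty one). Updating the layer with that behavior gives back the
same configuration, hence the same semantics: the self-attachment is a syntactic dependency
without any semantic counterpart. -/

theorem Val.isEmpty_of_mem {P : Set Port} {p : Port} (hp : p ∈ P) (hty : ty p = ∅) :
    IsEmpty (Val ty P) :=
  ⟨fun ν => by simpa [hty] using (ν p hp).2⟩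

theorem ValEq.eq {P : Set Port} {μ μ' : Val ty P} (h : ValEq μ μ') : μ = μ' :=
  funext fun p => funext fun hp => Subtype.ext (h p hp hp)

@[simp]
theorem Layer.update_self (l : Layer Port Service ty) : l.update l.f = l := rfl

theorem Config.update_self {c : Config Port Service ty} {l : Layer Port Service ty}
    (hl : l ∈ c.L) : c.update l l.f = c := by
  obtain ⟨L, A⟩ := c
  simp only [Config.update, Layer.update_self, Set.sdiff_union_self,
    Set.union_eq_left.mpr (Set.singleton_subset_iff.mpr hl)]

theorem Config.not_semdep_self {c : Config Port Service ty} {l : Layer Port Service ty}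
    (hl : l ∈ c.L) [Subsingleton (Val ty l.I → Set (Val ty l.O))] : ¬ c.semdep l l := by
  rw [Config.semdep, if_pos rfl]
  rintro ⟨f, μ, μ', hμ, hsem⟩
  obtain rfl : f = l.f := Subsingleton.elim _ _
  revert μ'
  rw [Config.update_self hl]
  exact fun μ' hμ hsem => hsem (congrArg (c.sem l) hμ.eq)

theorem isLAC_singleton {l : Layer Port Service ty} {A : Port → Option Port}
    (hIO : Disjoint l.I l.O)
    (hA : ∀ i o, A i = some o → i ∈ l.I ∧ o ∈ l.O ∧ ty o ⊆ ty i) :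
    IsLAC l.I l.O (⟨{l}, A⟩ : Config Port Service ty) where
  io_disj := hIO
  inputs k hk := by rw [Set.mem_singleton_iff.mp hk]
  outputs k hk := by rw [Set.mem_singleton_iff.mp hk]
  ports_disj k hk m hm := .inl (hk.trans hm.symm)
  domA i o h := by
    obtain ⟨hi, ho, -⟩ := hA i o h
    exact ⟨Set.mem_biUnion rfl hi, Set.mem_biUnion rfl ho⟩
  compat i o h := (hA i o h).2.2

def loopLayer : Layer Bool Unit (fun _ => ∅) := ⟨{false}, {true}, fun _ => ∅⟩

def loopConfig : Config Bool Unit (fun _ => ∅) :=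
  ⟨{loopLayer}, fun p => if p then none else some true⟩

/-- syntactic dependency does not imply semantic dependency: a single
layer with one input port and one output port, both of empty type, attached to each
other, depends on itself syntactically but not semantically. -/
theorem syndep_not_implies_semdep :
    ∃ (Port Service : Type) (ty : Port → Set Service) (Inp Outp : Set Port)
      (c : Config Port Service ty) (l : Layer Port Service ty),
      IsLAC Inp Outp c ∧ l ∈ c.L ∧ c.L = {l} ∧
      (∃ i o : Port, l.I = {i} ∧ l.O = {o} ∧ ty i = ∅ ∧ ty o = ∅ ∧ c.A i = some o) ∧
      c.syndep l l ∧ ¬ c.semdep l l := by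
  have hLAC : IsLAC loopLayer.I loopLayer.O loopConfig := by
    refine isLAC_singleton (by simp [loopLayer]) fun i o h => ?_
    cases i <;> simp_all [loopLayer]
  have : IsEmpty (Val (fun _ => (∅ : Set Unit)) loopLayer.I) :=
    Val.isEmpty_of_mem (p := false) rfl rfl
  exact ⟨Bool, Unit, _, _, _, loopConfig, loopLayer, hLAC, rfl, rfl,
    ⟨false, true, rfl, rfl, rfl, rfl, rfl⟩, ⟨true, rfl, false, rfl, rfl⟩,
    Config.not_semdep_self rfl⟩
end

section
/- Semantic dependency does not imply direct syntactic dependency: there exists a layered architecture configuration with three layers l, l', l'' in a chain (output of l attached to input of l', output of l' attached to input of l''), over SERVICE = {A, B} with all port types equal to {A, B}, where l's behavior constantly outputs A, and l' and l'' copy their input to their output, such that l'' semantically depends on l but l'' does not directly syntactically depend on l (¬ l →syn l''). -/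
/-!  A formalization of the layered architecture model:
ports, services, valuations, layers, configurations, attachment closure,
configuration semantics, semantic update, syntactic and semantic dependency. -/

open Set

universe u v

variable {Port : Type u} {Service : Type v} {ty : Port → Set Service}

/-! ### Auxiliary construction for the counterexample -/

section Example8

abbrev P5 := Fin 5
abbrev ty0 : P5 → Set Bool := fun _ => ({false, true} : Set Bool)

/-- Layer `l`: no inputs, output `0`, constantly `false`. -/
def lA : Layer P5 Bool ty0 :=
  ⟨∅, {0}, fun _ => {κ | ∀ q hq, (κ q hq : Bool) = false}⟩

/-- A copy layer with input `i` and output `o`. -/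
def lCopy (i o : P5) : Layer P5 Bool ty0 :=
  ⟨{i}, {o}, fun ι => {κ | ∀ p hp q hq, (κ q hq : Bool) = (ι p hp : Bool)}⟩

def lM : Layer P5 Bool ty0 := lCopy 1 2
def lR : Layer P5 Bool ty0 := lCopy 3 4

def Att : P5 → Option P5 := fun p => if p = 1 then some 0 else if p = 3 then some 2 else none

def cfg : Config P5 Bool ty0 := ⟨{lA, lM, lR}, Att⟩

/-- The updated behavior: constantly `true`. -/
def fB : Val ty0 lA.I → Set (Val ty0 lA.O) := fun _ => {κ | ∀ q hq, (κ q hq : Bool) = true}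

def lB : Layer P5 Bool ty0 := lA.update fB
def cfg' : Config P5 Bool ty0 := cfg.update lA fB

lemma Att1 : cfg.A 1 = some 0 := rfl
lemma Att3 : cfg.A 3 = some 2 := rfl
lemma Att1' : cfg'.A 1 = some 0 := rfl
lemma Att3' : cfg'.A 3 = some 2 := rfl

/- layer distinctness -/
lemma lA_ne_lM : lA ≠ lM := by
  intro h
  have h1 : lA.I = lM.I := congrArg Layer.I h
  have : (1 : P5) ∈ lA.I := by rw [h1]; exact rfl
  exact this
lemma lA_ne_lR : lA ≠ lR := by
  intro h
  have h1 : lA.I = lR.I := congrArg Layer.I h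
  have : (3 : P5) ∈ lA.I := by rw [h1]; exact rfl
  exact this
lemma lM_ne_lR : lM ≠ lR := by
  intro h
  have h1 : lM.I = lR.I := congrArg Layer.I h
  have : (1 : P5) ∈ lR.I := by rw [← h1]; exact rfl
  exact absurd (show (1 : P5) = 3 from this) (by decide)
lemma lB_ne_lM : lB ≠ lM := by
  intro h
  have h1 : lB.I = lM.I := congrArg Layer.I h
  have : (1 : P5) ∈ lB.I := by rw [h1]; exact rfl
  exact this
lemma lB_ne_lR : lB ≠ lR := by
  intro h
  have h1 : lB.I = lR.I := congrArg Layer.I h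
  have : (3 : P5) ∈ lB.I := by rw [h1]; exact rfl
  exact this

lemma cfg'_L : cfg'.L = {lB, lM, lR} := by
  ext k
  simp only [cfg', cfg, Config.update, Set.mem_union, Set.mem_diff,
    Set.mem_insert_iff, Set.mem_singleton_iff]
  constructor
  · rintro (⟨(h | h | h), hne⟩ | h) <;> tauto
  · rintro (h | h | h)
    · right; exact h
    · left; exact ⟨Or.inr (Or.inl h), by rw [h]; exact fun hh => lA_ne_lM hh.symm⟩
    · left; exact ⟨Or.inr (Or.inr h), by rw [h]; exact fun hh => lA_ne_lR hh.symm⟩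

/- proj lemmas -/
lemma proj_eq (c : Config P5 Bool ty0) (p : P5) (lx : Layer P5 Bool ty0)
    (hmem : lx ∈ c.L ∧ p ∈ lx.ports)
    (huniq : ∀ k, k ∈ c.L ∧ p ∈ k.ports → k = lx) : c.proj p = lx :=
  huniq _ (Classical.epsilon_spec (p := fun l => l ∈ c.L ∧ p ∈ l.ports) ⟨lx, hmem⟩)

lemma mem_ports_lA {p : P5} (h : p ∈ lA.ports) : p = 0 := by
  rcases h with h | h
  · exact absurd h (by exact fun hh => hh)
  · exact h
lemma mem_ports_lB {p : P5} (h : p ∈ lB.ports) : p = 0 := by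
  rcases h with h | h
  · exact absurd h (by exact fun hh => hh)
  · exact h
lemma mem_ports_lM {p : P5} (h : p ∈ lM.ports) : p = 1 ∨ p = 2 := h
lemma mem_ports_lR {p : P5} (h : p ∈ lR.ports) : p = 3 ∨ p = 4 := h

lemma cfg_proj0 : cfg.proj 0 = lA := by
  apply proj_eq
  · exact ⟨Or.inl rfl, Or.inr rfl⟩
  · rintro k ⟨(rfl | rfl | rfl), hk⟩
    · rfl
    · rcases mem_ports_lM hk with h | h <;> exact absurd h (by decide)
    · rcases mem_ports_lR hk with h | h <;> exact absurd h (by decide)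
lemma cfg_proj2 : cfg.proj 2 = lM := by
  apply proj_eq
  · exact ⟨Or.inr (Or.inl rfl), Or.inr rfl⟩
  · rintro k ⟨(rfl | rfl | rfl), hk⟩
    · exact absurd (mem_ports_lA hk) (by decide)
    · rfl
    · rcases mem_ports_lR hk with h | h <;> exact absurd h (by decide)
lemma cfg_proj4 : cfg.proj 4 = lR := by
  apply proj_eq
  · exact ⟨Or.inr (Or.inr rfl), Or.inr rfl⟩
  · rintro k ⟨(rfl | rfl | rfl), hk⟩
    · exact absurd (mem_ports_lA hk) (by decide)
    · rcases mem_ports_lM hk with h | h <;> exact absurd h (by decide)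
    · rfl

lemma cfg'_proj0 : cfg'.proj 0 = lB := by
  apply proj_eq
  · exact ⟨by rw [cfg'_L]; exact Or.inl rfl, Or.inr rfl⟩
  · intro k ⟨hkL, hk⟩
    rw [cfg'_L] at hkL
    rcases hkL with rfl | rfl | rfl
    · rfl
    · rcases mem_ports_lM hk with h | h <;> exact absurd h (by decide)
    · rcases mem_ports_lR hk with h | h <;> exact absurd h (by decide)
lemma cfg'_proj2 : cfg'.proj 2 = lM := by
  apply proj_eq
  · exact ⟨by rw [cfg'_L]; exact Or.inr (Or.inl rfl), Or.inr rfl⟩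
  · intro k ⟨hkL, hk⟩
    rw [cfg'_L] at hkL
    rcases hkL with rfl | rfl | rfl
    · exact absurd (mem_ports_lB hk) (by decide)
    · rfl
    · rcases mem_ports_lR hk with h | h <;> exact absurd h (by decide)
lemma cfg'_proj4 : cfg'.proj 4 = lR := by
  apply proj_eq
  · exact ⟨by rw [cfg'_L]; exact Or.inr (Or.inr rfl), Or.inr rfl⟩
  · intro k ⟨hkL, hk⟩
    rw [cfg'_L] at hkL
    rcases hkL with rfl | rfl | rfl
    · exact absurd (mem_ports_lB hk) (by decide)
    · rcases mem_ports_lM hk with h | h <;> exact absurd h (by decide)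
    · rfl

/- in/out ports -/
lemma cfg_out : cfg.outPorts = {0, 2, 4} := by
  simp only [Config.outPorts, cfg]
  ext p
  simp only [Set.mem_iUnion, Set.mem_insert_iff, Set.mem_singleton_iff]
  constructor
  · rintro ⟨k, (rfl | rfl | rfl), hk⟩
    · exact Or.inl hk
    · exact Or.inr (Or.inl hk)
    · exact Or.inr (Or.inr hk)
  · rintro (rfl | rfl | rfl)
    · exact ⟨lA, Or.inl rfl, rfl⟩
    · exact ⟨lM, Or.inr (Or.inl rfl), rfl⟩
    · exact ⟨lR, Or.inr (Or.inr rfl), rfl⟩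
lemma cfg'_out : cfg'.outPorts = {0, 2, 4} := by
  simp only [Config.outPorts]
  rw [cfg'_L]
  ext p
  simp only [Set.mem_iUnion, Set.mem_insert_iff, Set.mem_singleton_iff]
  constructor
  · rintro ⟨k, (rfl | rfl | rfl), hk⟩
    · exact Or.inl hk
    · exact Or.inr (Or.inl hk)
    · exact Or.inr (Or.inr hk)
  · rintro (rfl | rfl | rfl)
    · exact ⟨lB, Or.inl rfl, rfl⟩
    · exact ⟨lM, Or.inr (Or.inl rfl), rfl⟩
    · exact ⟨lR, Or.inr (Or.inr rfl), rfl⟩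
lemma cfg_in : cfg.inPorts = {1, 3} := by
  simp only [Config.inPorts, cfg]
  ext p
  simp only [Set.mem_iUnion, Set.mem_insert_iff, Set.mem_singleton_iff]
  constructor
  · rintro ⟨k, (rfl | rfl | rfl), hk⟩
    · exact absurd hk (fun h => h)
    · exact Or.inl hk
    · exact Or.inr hk
  · rintro (rfl | rfl)
    · exact ⟨lM, Or.inr (Or.inl rfl), rfl⟩
    · exact ⟨lR, Or.inr (Or.inr rfl), rfl⟩
lemma cfg'_in : cfg'.inPorts = {1, 3} := by
  simp only [Config.inPorts]
  rw [cfg'_L]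
  ext p
  simp only [Set.mem_iUnion, Set.mem_insert_iff, Set.mem_singleton_iff]
  constructor
  · rintro ⟨k, (rfl | rfl | rfl), hk⟩
    · exact absurd hk (fun h => h)
    · exact Or.inl hk
    · exact Or.inr hk
  · rintro (rfl | rfl)
    · exact ⟨lM, Or.inr (Or.inl rfl), rfl⟩
    · exact ⟨lR, Or.inr (Or.inr rfl), rfl⟩

lemma cfg_openIn : cfg.openIn = ∅ := by
  ext p
  simp only [Config.openIn, Set.mem_diff, Set.mem_empty_iff_false, iff_false]
  rintro ⟨hin, hns⟩
  rw [cfg_in] at hin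
  rcases hin with rfl | rfl
  · exact hns rfl
  · exact hns rfl
lemma cfg'_openIn : cfg'.openIn = ∅ := by
  ext p
  simp only [Config.openIn, Set.mem_diff, Set.mem_empty_iff_false, iff_false]
  rintro ⟨hin, hns⟩
  rw [cfg'_in] at hin
  rcases hin with rfl | rfl
  · exact hns rfl
  · exact hns rfl

/- star lemmas -/
lemma star_O {Port : Type} {S : Type} {ty : Port → Set S} (c : Config Port S ty)
    (l : Layer Port S ty) : l.O ⊆ c.star l := by
  intro p hp
  rw [Config.star, Set.mem_sInter]
  exact fun P hP => hP.2.1 hp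
lemma star_attach {Port : Type} {S : Type} {ty : Port → Set S} (c : Config Port S ty)
    (l : Layer Port S ty) {i o : Port} (h : c.A i = some o) (hi : i ∈ c.star l) :
    o ∈ c.star l := by
  rw [Config.star, Set.mem_sInter] at hi ⊢
  exact fun P hP => hP.2.2.1 i o h (hi P hP)
lemma star_projI {Port : Type} {S : Type} {ty : Port → Set S} (c : Config Port S ty)
    (l : Layer Port S ty) {o : Port} (h1 : o ∈ c.outPorts) (h2 : o ∈ c.star l) :
    (c.proj o).I ⊆ c.star l := by
  intro p hp
  rw [Config.star, Set.mem_sInter] at h2 ⊢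
  exact fun P hP => hP.2.2.2 o h1 (h2 P hP) hp

/- star memberships for cfg and cfg' -/
lemma cfg_s4 : (4 : P5) ∈ cfg.star lR := star_O cfg lR rfl
lemma cfg_s3 : (3 : P5) ∈ cfg.star lR := by
  have := star_projI cfg lR (by rw [cfg_out]; right; right; rfl) cfg_s4
  rw [cfg_proj4] at this
  exact this rfl
lemma cfg_s2 : (2 : P5) ∈ cfg.star lR := star_attach cfg lR Att3 cfg_s3
lemma cfg_s1 : (1 : P5) ∈ cfg.star lR := by
  have := star_projI cfg lR (by rw [cfg_out]; right; left; rfl) cfg_s2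
  rw [cfg_proj2] at this
  exact this rfl
lemma cfg_s0 : (0 : P5) ∈ cfg.star lR := star_attach cfg lR Att1 cfg_s1

lemma cfg'_s4 : (4 : P5) ∈ cfg'.star lR := star_O cfg' lR rfl
lemma cfg'_s3 : (3 : P5) ∈ cfg'.star lR := by
  have := star_projI cfg' lR (by rw [cfg'_out]; right; right; rfl) cfg'_s4
  rw [cfg'_proj4] at this
  exact this rfl
lemma cfg'_s2 : (2 : P5) ∈ cfg'.star lR := star_attach cfg' lR Att3' cfg'_s3
lemma cfg'_s1 : (1 : P5) ∈ cfg'.star lR := by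
  have := star_projI cfg' lR (by rw [cfg'_out]; right; left; rfl) cfg'_s2
  rw [cfg'_proj2] at this
  exact this rfl
lemma cfg'_s0 : (0 : P5) ∈ cfg'.star lR := star_attach cfg' lR Att1' cfg'_s1

/- canonical valuations -/
def vFalse (P : Set P5) : Val ty0 P := fun _ _ => ⟨false, Or.inl rfl⟩
def μ0 : Val ty0 cfg.openIn := fun p hp => absurd (cfg_openIn ▸ hp) (Set.notMem_empty p)
def μ0' : Val ty0 cfg'.openIn := fun p hp => absurd (cfg'_openIn ▸ hp) (Set.notMem_empty p)

/-- The constantly-false output valuation of `lR` is in `cfg`'s semantics of `lR`. -/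
lemma mem_cfg_sem : vFalse lR.O ∈ cfg.sem lR μ0 := by
  refine ⟨vFalse (cfg.star lR), star_O cfg lR, rfl, ?_, ?_, ?_⟩
  · intro p h1 _
    exact absurd (cfg_openIn ▸ h1) (Set.notMem_empty p)
  · intro i o _ _ _
    rfl
  · intro o hs hout
    rw [cfg_out] at hout
    rcases hout with rfl | rfl | rfl
    · rw [cfg_proj0]
      exact ⟨Set.empty_subset _, vFalse lA.O, fun q hq => rfl, fun p h1 h2 => rfl⟩
    · rw [cfg_proj2]
      refine ⟨fun p hp => ?_, vFalse lM.O, fun p hp q hq => rfl, fun p h1 h2 => rfl⟩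
      rcases hp with rfl
      exact cfg_s1
    · rw [cfg_proj4]
      refine ⟨fun p hp => ?_, vFalse lR.O, fun p hp q hq => rfl, fun p h1 h2 => rfl⟩
      rcases hp with rfl
      exact cfg_s3

/-- The constantly-false output valuation of `lR` is NOT in `cfg'`'s semantics of `lR`. -/
lemma notMem_cfg'_sem : vFalse lR.O ∉ cfg'.sem lR μ0' := by
  rintro ⟨ν, hO, hκ, _, hatt, hout⟩
  -- ν 0 = true
  have h0 := hout 0 cfg'_s0 (by rw [cfg'_out]; exact Or.inl rfl)
  rw [cfg'_proj0] at h0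
  obtain ⟨hI0, ξ0, hξ0, hag0⟩ := h0
  have hν0 : (ν 0 cfg'_s0 : Bool) = true := by
    rw [← hag0 0 rfl cfg'_s0]
    exact hξ0 0 rfl
  -- ν 1 = ν 0
  have h2' := hout 2 cfg'_s2 (by rw [cfg'_out]; exact Or.inr (Or.inl rfl))
  rw [cfg'_proj2] at h2'
  obtain ⟨hI2, ξ2, hξ2, hag2⟩ := h2'
  have hν2 : (ν 2 cfg'_s2 : Bool) = (ν 1 cfg'_s1 : Bool) := by
    rw [← hag2 2 rfl cfg'_s2]
    exact hξ2 1 rfl 2 rfl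
  have hν1 : (ν 1 cfg'_s1 : Bool) = (ν 0 cfg'_s0 : Bool) := hatt 1 0 Att1' cfg'_s1 cfg'_s0
  -- ν 4 = ν 3 = ν 2
  have h4' := hout 4 cfg'_s4 (by rw [cfg'_out]; exact Or.inr (Or.inr rfl))
  rw [cfg'_proj4] at h4'
  obtain ⟨hI4, ξ4, hξ4, hag4⟩ := h4'
  have hν4 : (ν 4 cfg'_s4 : Bool) = (ν 3 cfg'_s3 : Bool) := by
    rw [← hag4 4 rfl cfg'_s4]
    exact hξ4 3 rfl 4 rfl
  have hν3 : (ν 3 cfg'_s3 : Bool) = (ν 2 cfg'_s2 : Bool) := hatt 3 2 Att3' cfg'_s3 cfg'_s2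
  -- but κ 4 = false
  have hfalse : (ν 4 cfg'_s4 : Bool) = false := by
    have := congrFun (congrFun hκ 4) rfl
    have h : (vFalse lR.O 4 rfl : Bool) = (Val.restrict hO ν 4 rfl : Bool) :=
      congrArg Subtype.val this
    exact h.symm
  rw [hν4, hν3, hν2, hν1, hν0] at hfalse
  exact Bool.true_eq_false_eq_False hfalse

end Example8
/-- semantic dependency does not imply direct syntactic dependency:
a three-layer chain `l → l' → l''` over a two-element service set, where `l`
constantly outputs `a` and `l'`, `l''` copy their input to their output, in which
`l''` semantically depends on `l` but not directly syntactically. -/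
theorem semdep_not_implies_syndep :
    ∃ (Port Service : Type) (ty : Port → Set Service) (Inp Outp : Set Port)
      (c : Config Port Service ty) (l l' l'' : Layer Port Service ty)
      (a b : Service),
      IsLAC Inp Outp c ∧ c.L = {l, l', l''} ∧
      a ≠ b ∧ (∀ p, ty p = {a, b}) ∧
      (∃ o o' o'' i' i'' : Port,
        l.I = ∅ ∧ l.O = {o} ∧ l'.I = {i'} ∧ l'.O = {o'} ∧
        l''.I = {i''} ∧ l''.O = {o''} ∧
        c.A i' = some o ∧ c.A i'' = some o' ∧
        (∀ p, p ∉ ({i', i''} : Set Port) → c.A p = none)) ∧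
      (∀ ι, l.f ι = {κ | ∀ q hq, (κ q hq : Service) = a}) ∧
      (∀ ι, l'.f ι = {κ | ∀ p hp q hq, (κ q hq : Service) = (ι p hp : Service)}) ∧
      (∀ ι, l''.f ι = {κ | ∀ p hp q hq, (κ q hq : Service) = (ι p hp : Service)}) ∧
      c.semdep l l'' ∧ ¬ c.syndep l l'' := by
  refine ⟨P5, Bool, ty0, {1, 3}, {0, 2, 4}, cfg, lA, lM, lR, false, true,
    ?_, rfl, by decide, fun _ => rfl, ?_, fun _ => rfl, fun _ => rfl, fun _ => rfl, ?_, ?_⟩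
  · -- IsLAC
    refine ⟨?_, ?_, ?_, ?_, ?_, ?_⟩
    · rw [Set.disjoint_left]
      rintro a (rfl | rfl) h <;>
        rcases h with h | h | h <;> exact absurd h (by decide)
    · rintro k (rfl | rfl | rfl)
      · exact Set.empty_subset _
      · rintro p rfl; exact Or.inl rfl
      · rintro p rfl; exact Or.inr rfl
    · rintro k (rfl | rfl | rfl)
      · rintro p rfl; exact Or.inl rfl
      · rintro p rfl; exact Or.inr (Or.inl rfl)
      · rintro p rfl; exact Or.inr (Or.inr rfl)
    · rintro k (rfl | rfl | rfl) lx (rfl | rfl | rfl)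
      · exact Or.inl rfl
      · refine Or.inr (Set.disjoint_left.mpr fun p hp hq => ?_)
        have h1 := mem_ports_lA hp
        rcases mem_ports_lM hq with h2 | h2 <;> (rw [h1] at h2; exact absurd h2 (by decide))
      · refine Or.inr (Set.disjoint_left.mpr fun p hp hq => ?_)
        have h1 := mem_ports_lA hp
        rcases mem_ports_lR hq with h2 | h2 <;> (rw [h1] at h2; exact absurd h2 (by decide))
      · refine Or.inr (Set.disjoint_left.mpr fun p hp hq => ?_)
        have h1 := mem_ports_lA hq
        rcases mem_ports_lM hp with h2 | h2 <;> (rw [h1] at h2; exact absurd h2 (by decide))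
      · exact Or.inl rfl
      · refine Or.inr (Set.disjoint_left.mpr fun p hp hq => ?_)
        rcases mem_ports_lM hp with h1 | h1 <;> rcases mem_ports_lR hq with h2 | h2 <;>
          (rw [h1] at h2; exact absurd h2 (by decide))
      · refine Or.inr (Set.disjoint_left.mpr fun p hp hq => ?_)
        have h1 := mem_ports_lA hq
        rcases mem_ports_lR hp with h2 | h2 <;> (rw [h1] at h2; exact absurd h2 (by decide))
      · refine Or.inr (Set.disjoint_left.mpr fun p hp hq => ?_)
        rcases mem_ports_lR hp with h1 | h1 <;> rcases mem_ports_lM hq with h2 | h2 <;>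
          (rw [h1] at h2; exact absurd h2 (by decide))
      · exact Or.inl rfl
    · intro i o h
      have h' : Att i = some o := h
      rw [Att] at h'
      split_ifs at h' with e1 e3
      · subst e1
        have : o = 0 := (Option.some.inj h').symm
        subst this
        exact ⟨by rw [cfg_in]; exact Or.inl rfl, by rw [cfg_out]; exact Or.inl rfl⟩
      · subst e3
        have : o = 2 := (Option.some.inj h').symm
        subst this
        exact ⟨by rw [cfg_in]; exact Or.inr rfl, by rw [cfg_out]; exact Or.inr (Or.inl rfl)⟩
    · intro i o _
      exact subset_rfl
  · -- the ports
    refine ⟨0, 2, 4, 1, 3, rfl, rfl, rfl, rfl, rfl, rfl, Att1, Att3, ?_⟩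
    intro p hp
    have h1 : p ≠ 1 := fun h => hp (Or.inl h)
    have h3 : p ≠ 3 := fun h => hp (Or.inr h)
    show Att p = none
    rw [Att]
    rw [if_neg h1, if_neg h3]
  · -- semdep
    rw [Config.semdep, if_neg lA_ne_lR]
    refine ⟨fB, μ0, μ0', ?_, ?_⟩
    · intro p h _
      exact absurd (cfg_openIn ▸ h) (Set.notMem_empty p)
    · intro heq
      exact notMem_cfg'_sem (heq ▸ mem_cfg_sem)
  · -- ¬ syndep
    rintro ⟨o, ho, i, hi, hA⟩
    have hi3 : i = 3 := hi
    have ho0 : o = 0 := ho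
    subst hi3; subst ho0
    rw [Att3] at hA
    exact absurd (Option.some.inj hA) (by decide)
end

section
/- Monotonicity of attachment-closure consistency: for a layered architecture configuration c, layer l, valuation μ of the open input ports, and any valuation ν of out(l)* witnessing membership of ν|_{out(l)} in ⟦c⟧_l(μ), for every layer m with out(m)* ⊆ out(l)*, the restriction ν|_{out(m)*} witnesses membership of ν|_{out(m)} in ⟦c⟧_m(μ); in particular ⟦c⟧_l(μ) ≠ ∅ and out(m)* ⊆ out(l)* imply ⟦c⟧_m(μ) ≠ ∅. -/
/-!  A formalization of the layered architecture model:
ports, services, valuations, layers, configurations, attachment closure,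
configuration semantics, semantic update, syntactic and semantic dependency. -/

open Set

universe u v

variable {Port : Type u} {Service : Type v} {ty : Port → Set Service}

variable {Inp Outp : Set Port}

lemma Config.O_subset_star (c : Config Port Service ty) (l : Layer Port Service ty) :
    l.O ⊆ c.star l := fun p hp P hP => hP.2.1 hp

lemma Config.star_closed_A (c : Config Port Service ty) (l : Layer Port Service ty)
    {i o : Port} (hio : c.A i = some o) (hi : i ∈ c.star l) : o ∈ c.star l :=
  fun P hP => hP.2.2.1 i o hio (hi P hP)

lemma Config.star_closed_I (c : Config Port Service ty) (l : Layer Port Service ty)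
    {o : Port} (ho : o ∈ c.outPorts) (hos : o ∈ c.star l) :
    (c.proj o).I ⊆ c.star l :=
  fun p hp P hP => hP.2.2.2 o ho (hos P hP) hp

/-- monotonicity of attachment-closure consistency: a consistent
valuation of `out(l)*` restricts to a consistent valuation of `out(m)*` whenever
`out(m)* ⊆ out(l)*`; in particular the semantics of `m` is then nonempty. -/
theorem witness_restrict (c : Config Port Service ty) (hc : IsLAC Inp Outp c)
    (l m : Layer Port Service ty) (hl : l ∈ c.L) (hm : m ∈ c.L)
    (μ : Val ty c.openIn) (ν : Val ty (c.star l))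
    (hν : c.witness l μ ν) (hsub : c.star m ⊆ c.star l) :
    c.witness m μ (Val.restrict hsub ν) ∧
    (∃ hO : m.O ⊆ c.star l, Val.restrict hO ν ∈ c.sem m μ) ∧
    c.sem m μ ≠ ∅ := by
  obtain ⟨h1, h2, h3⟩ := hν
  have hwit : c.witness m μ (Val.restrict hsub ν) := by
    refine ⟨fun p hp hps => h1 p hp (hsub hps),
      fun i o hio hi ho => h2 i o hio (hsub hi) (hsub ho), ?_⟩
    intro o hos ho
    obtain ⟨hI, ξ, hξ, hagree⟩ := h3 o (hsub hos) ho
    refine ⟨c.star_closed_I m ho hos, ξ, hξ, fun p hp1 hp2 => hagree p hp1 (hsub hp2)⟩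
  have hOm : m.O ⊆ c.star m := c.O_subset_star m
  have hO : m.O ⊆ c.star l := fun p hp => hsub (hOm hp)
  have hmem : Val.restrict hO ν ∈ c.sem m μ :=
    ⟨Val.restrict hsub ν, hOm, rfl, hwit⟩
  refine ⟨hwit, ⟨hO, hmem⟩, fun h => ?_⟩
  rw [h] at hmem
  exact hmem
end
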